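/- arXiv:1012.4150 — 2 statements merged into one kernel-verified Lean document; each statement's English description precedes it below -/
import Mathlib

section
/- Let π : X̃ → X be a surjection of uniformly discrete metric spaces which is a K-metric cover, let R, S > 0 satisfy S + R + 1 ≤ K, let T be a bounded operator on ℓ²(X,H₀) of propagation at most R whose lift T̃ at scale R is a bounded operator on ℓ²(X̃,H₀), and let ξ̃ ∈ ℓ²(X̃,H₀) be supported in the closed ball {w : d(w,u) ≤ S} for some u ∈ X̃. Define ξ ∈ ℓ²(X,H₀) by ξ(π(w)) = ξ̃(w) for w with d(w,u) ≤ S and ξ(x) = 0 for x outside the image of this ball (well defined since π is injective on the ball). Then ‖ξ‖ = ‖ξ̃‖ and ‖Tξ‖ = ‖T̃ξ̃‖. -/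
noncomputable section

open scoped ENNReal

/-- ℓ²(Y, H): the Hilbert space of square-summable `H`-valued families indexed by `Y`. -/
abbrev L2 (Y : Type*) (H : Type*) [NormedAddCommGroup H] [InnerProductSpace ℂ H] : Type _ :=
  lp (fun _ : Y => H) 2

namespace Roe

variable {Y H : Type*} [NormedAddCommGroup H] [InnerProductSpace ℂ H]

set_option maxHeartbeats 1000000 in
/-- The matrix entry `T_{x,y}` of a bounded operator `T` on `ℓ²(Y,H)`: the continuous linear
map on `H` determined by `T_{x,y} v = (T (δ_y ⊗ v)) x`. -/
def entry (T : L2 Y H →L[ℂ] L2 Y H) (x y : Y) : H →L[ℂ] H :=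
  letI := Classical.decEq Y
  LinearMap.mkContinuous
    { toFun := fun v => T (lp.single 2 y v) x
      map_add' := by
        intro v w
        show (T (lp.single 2 y (v + w))) x = (T (lp.single 2 y v)) x + (T (lp.single 2 y w)) x
        have h : lp.single (E := fun _ : Y => H) 2 y (v + w)
            = lp.single 2 y v + lp.single 2 y w := by
          apply lp.ext
          funext j
          by_cases hj : j = y
          · subst hj
            simp only [lp.single_apply_self, lp.coeFn_add, Pi.add_apply]
          · simp only [lp.single_apply_ne _ _ _ hj, lp.coeFn_add, Pi.add_apply, add_zero]
        rw [h, map_add]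
        simp only [lp.coeFn_add, Pi.add_apply]
      map_smul' := by
        intro c v
        show (T (lp.single 2 y (c • v))) x = c • (T (lp.single 2 y v)) x
        rw [lp.single_smul, map_smul]
        simp only [lp.coeFn_smul, Pi.smul_apply] }
    ‖T‖
    (by
      intro v
      show ‖(T (lp.single 2 y v)) x‖ ≤ ‖T‖ * ‖v‖
      have h1 : ‖(T (lp.single 2 y v)) x‖ ≤ ‖T (lp.single 2 y v)‖ :=
        lp.norm_apply_le_norm (by norm_num) _ _
      have h2 : ‖T (lp.single 2 y v)‖ ≤ ‖T‖ * ‖lp.single (E := fun _ : Y => H) 2 y v‖ :=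
        T.le_opNorm _
      have h3 : ‖lp.single (E := fun _ : Y => H) 2 y v‖ = ‖v‖ := by
        simpa using lp.norm_single (E := fun _ : Y => H) (p := 2) (by norm_num) (fun _ => v) y
      calc ‖(T (lp.single 2 y v)) x‖ ≤ ‖T‖ * ‖lp.single (E := fun _ : Y => H) 2 y v‖ :=
            le_trans h1 h2
        _ = ‖T‖ * ‖v‖ := by rw [h3])

/-- `T` has propagation at most `R` with respect to the distance function `d`. -/
def PropagationLE (d : Y → Y → ℝ) (T : L2 Y H →L[ℂ] L2 Y H) (R : ℝ) : Prop :=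
  ∀ x y : Y, R < d x y → entry T x y = 0

/-- A set is bounded with respect to the distance function `d`. -/
def DBounded (d : Y → Y → ℝ) (B : Set Y) : Prop :=
  ∃ C : ℝ, ∀ x ∈ B, ∀ y ∈ B, d x y ≤ C

/-- `T` is locally compact with respect to the distance function `d`: all matrix entries are
compact operators, and over every bounded set only finitely many matrix entries are nonzero. -/
def LocallyCompact (d : Y → Y → ℝ) (T : L2 Y H →L[ℂ] L2 Y H) : Prop :=
  (∀ x y : Y, IsCompactOperator (entry T x y)) ∧
    ∀ B : Set Y, DBounded d B →
      {p : Y × Y | p.1 ∈ B ∧ p.2 ∈ B ∧ entry T p.1 p.2 ≠ 0}.Finite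

/-- Membership in the algebraic Roe algebra `ℂ[Y]`: locally compact and finite propagation. -/
def MemRoeAlgebraic (d : Y → Y → ℝ) (T : L2 Y H →L[ℂ] L2 Y H) : Prop :=
  LocallyCompact d T ∧ ∃ R : ℝ, PropagationLE d T R

/-- The Roe algebra `C*(Y)`: the operator-norm closure of `ℂ[Y]` in `B(ℓ²(Y,H))`. -/
def RoeAlgebra (d : Y → Y → ℝ) : Set (L2 Y H →L[ℂ] L2 Y H) :=
  closure {T | MemRoeAlgebraic d T}

/-- `T` is a ghost operator with respect to the distance function `d`. -/
def IsGhost (d : Y → Y → ℝ) (T : L2 Y H →L[ℂ] L2 Y H) : Prop :=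
  ∀ R : ℝ, 0 < R → ∀ ε : ℝ, 0 < ε → ∃ B : Set Y, DBounded d B ∧
    ∀ ξ : L2 Y H, ‖ξ‖ = 1 →
      (∃ x : Y, x ∉ B ∧ ∀ z : Y, ξ z ≠ 0 → d x z < R) → ‖T ξ‖ < ε

/-- The support of `ξ ∈ ℓ²(Y,H)` has diameter at most `S` for the distance function `d`. -/
def SupportDiamLE (d : Y → Y → ℝ) (ξ : L2 Y H) (S : ℝ) : Prop :=
  ∀ z w : Y, ξ z ≠ 0 → ξ w ≠ 0 → d z w ≤ S

end Roe

/-- `π : X' → X` is a `K`-metric cover: it is surjective, and for every `u` the restriction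
of `π` to the open ball of radius `K` about `u` is a distance-preserving bijection onto the
open ball of radius `K` about `π u`. -/
def IsMetricCover {X' X : Type*} (d' : X' → X' → ℝ) (d : X → X → ℝ)
    (π : X' → X) (K : ℝ) : Prop :=
  Function.Surjective π ∧
    ∀ u : X', Set.BijOn π {w | d' u w < K} {x | d (π u) x < K} ∧
      ∀ w w' : X', d' u w < K → d' u w' < K → d (π w) (π w') = d' w w'

/-- `T'` is the lift of `T` at scale `R` along `π`: its matrix entries are
`T'_{u,v} = T_{π u, π v}` when `d'(u,v) ≤ R` and `0` otherwise. -/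
def IsLift {X' X H : Type*} [NormedAddCommGroup H] [InnerProductSpace ℂ H]
    (π : X' → X) (d' : X' → X' → ℝ)
    (T : L2 X H →L[ℂ] L2 X H) (R : ℝ) (T' : L2 X' H →L[ℂ] L2 X' H) : Prop :=
  ∀ u v : X', (d' u v ≤ R → Roe.entry T' u v = Roe.entry T (π u) (π v)) ∧
    (R < d' u v → Roe.entry T' u v = 0)

/-- `T'` is the lift at scale `S` along `π` of the `n`-th diagonal block `T⁽ⁿ⁾ = PₙTPₙ` of a
bounded operator `T` on `ℓ²(⊔ₙ Vₙ, H)`. -/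
def IsBlockLift {V : ℕ → Type*} {W H : Type*} [NormedAddCommGroup H] [InnerProductSpace ℂ H]
    {n : ℕ} (π : W → V n) (d' : W → W → ℝ)
    (T : L2 (Σ k, V k) H →L[ℂ] L2 (Σ k, V k) H) (S : ℝ)
    (T' : L2 W H →L[ℂ] L2 W H) : Prop :=
  ∀ u v : W, (d' u v ≤ S → Roe.entry T' u v = Roe.entry T ⟨n, π u⟩ ⟨n, π v⟩) ∧
    (S < d' u v → Roe.entry T' u v = 0)

/-- The graph metric of a simple graph, as a real-valued distance function
(shortest path length). -/
def gdist {V : Type*} (G : SimpleGraph V) (u v : V) : ℝ := G.dist u v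


/-! On the closed balls of radius `r < K` about `u` the cover `π` is an isometric bijection onto
the balls about `π u`. The vectors `ξ'` and `ξ` live on the `S`-balls and, by propagation, `T' ξ'` and `T ξ` on
the `(S + R)`-balls; there the matrix entries of `T'` and `T` correspond (when `d(w, v) > R` both vanish,
because `π` preserves `d(w, v)`), so the row sums computing `(T' ξ') w` and `(T ξ) (π w)` are
reindexings of each other. Both identities are then equalities of `ℓ²` norms of vectors transported
by an injection. -/

open Function Metric

theorem hasSum_iff_hasSum_of_injOn {α β E : Type*} [AddCommMonoid E] [TopologicalSpace E]
    {f : α → E} {g : β → E} {π : β → α} {A : Set β} (hπ : Set.InjOn π A)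
    (hf : support f ⊆ π '' A) (hg : support g ⊆ A) (hfg : ∀ w ∈ A, f (π w) = g w) {a : E} :
    HasSum f a ↔ HasSum g a := by
  have hrange : ∀ x ∉ Set.range (A.domRestrict π), f x = 0 := fun x hx =>
    notMem_support.mp fun hfx => hx (Set.range_domRestrict π A ▸ hf hfx)
  rw [← hasSum_subtype_iff_of_support_subset hg, ← hπ.injective.hasSum_iff hrange]
  exact iff_of_eq (congrArg (HasSum · a) (funext fun w => hfg w w.2))

theorem Function.support_norm_rpow {γ E : Type*} [NormedAddCommGroup E] (f : γ → E) {q : ℝ}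
    (hq : q ≠ 0) : support (fun i => ‖f i‖ ^ q) = support f := by
  ext
  simp [hq]

theorem lp.norm_eq_norm_of_injOn {α β E : Type*} [NormedAddCommGroup E]
    {p : ℝ≥0∞} (hp : 0 < p.toReal) {η : lp (fun _ : α => E) p} {η' : lp (fun _ : β => E) p}
    {π : β → α} {A : Set β} (hπ : Set.InjOn π A)
    (hη : support η ⊆ π '' A) (hη' : support η' ⊆ A) (hηη' : ∀ w ∈ A, η (π w) = η' w) :
    ‖η‖ = ‖η'‖ := by
  have hsum := ((lp.memℓp η').summable hp).hasSum
  rw [← hasSum_iff_hasSum_of_injOn hπ ((support_norm_rpow _ hp.ne').trans_subset hη)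
    ((support_norm_rpow _ hp.ne').trans_subset hη') (fun w hw => by simp only [hηη' w hw])] at hsum
  rw [lp.norm_eq_tsum_rpow hp, lp.norm_eq_tsum_rpow hp, hsum.tsum_eq]

namespace Roe

variable {Y H : Type*} [NormedAddCommGroup H] [InnerProductSpace ℂ H]

theorem hasSum_entry_apply (T : L2 Y H →L[ℂ] L2 Y H) (ξ : L2 Y H) (x : Y) :
    HasSum (fun y => entry T x y (ξ y)) (T ξ x) := by
  classical
  exact ((lp.hasSum_single ENNReal.ofNat_ne_top ξ).mapL T).mapL (lp.evalCLM ℂ _ 2 x)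

theorem exists_entry_apply_ne_zero {T : L2 Y H →L[ℂ] L2 Y H} {ξ : L2 Y H} {x : Y}
    (h : T ξ x ≠ 0) : ∃ y, entry T x y (ξ y) ≠ 0 := by
  by_contra! h0
  exact h ((hasSum_entry_apply T ξ x).unique (by simpa only [h0] using hasSum_zero))

theorem support_entry_apply_subset (T : L2 Y H →L[ℂ] L2 Y H) (ξ : L2 Y H) (x : Y) :
    support (fun y => entry T x y (ξ y)) ⊆ support ξ :=
  fun _ hy hξ => hy (by simp [hξ])

theorem apply_eq_apply_of_injOn {Y' : Type*} {T : L2 Y H →L[ℂ] L2 Y H}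
    {T' : L2 Y' H →L[ℂ] L2 Y' H} {ξ : L2 Y H} {ξ' : L2 Y' H} {π : Y' → Y} {A : Set Y'}
    (hπ : Set.InjOn π A) (hξ : support ξ ⊆ π '' A) (hξ' : support ξ' ⊆ A)
    (hξξ' : ∀ v ∈ A, ξ (π v) = ξ' v) {x : Y} {w : Y'}
    (hentry : ∀ v ∈ A, entry T x (π v) = entry T' w v) : T ξ x = T' ξ' w := by
  refine (hasSum_entry_apply T ξ x).unique
    ((hasSum_iff_hasSum_of_injOn hπ ?_ ?_ ?_).2 (hasSum_entry_apply T' ξ' w))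
  · exact (support_entry_apply_subset T ξ x).trans hξ
  · exact (support_entry_apply_subset T' ξ' w).trans hξ'
  · intro v hv
    rw [hentry v hv, hξξ' v hv]

theorem PropagationLE.support_apply_subset [PseudoMetricSpace Y] {T : L2 Y H →L[ℂ] L2 Y H}
    {R S : ℝ} (hT : PropagationLE (fun x y : Y => dist x y) T R) {ξ : L2 Y H} {z : Y}
    (hξ : support ξ ⊆ closedBall z S) : support (T ξ) ⊆ closedBall z (S + R) := by
  intro x hx
  obtain ⟨y, hy⟩ := exists_entry_apply_ne_zero hx
  have hxy : dist x y ≤ R := not_lt.1 fun h => hy (by rw [hT x y h]; rfl)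
  have hyz : dist y z ≤ S := hξ fun h0 => hy (by rw [h0, map_zero])
  rw [mem_closedBall]
  linarith [dist_triangle x y z]

end Roe

section Lift

variable {X' X H : Type*} [NormedAddCommGroup H] [InnerProductSpace ℂ H] {π : X' → X}
  {T : L2 X H →L[ℂ] L2 X H} {T' : L2 X' H →L[ℂ] L2 X' H} {R : ℝ}

theorem IsLift.propagationLE {d' : X' → X' → ℝ} (hT' : IsLift π d' T R T') :
    Roe.PropagationLE d' T' R :=
  fun u v h => (hT' u v).2 h

theorem IsLift.entry_eq_of_dist_eq [PseudoMetricSpace X'] [PseudoMetricSpace X]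
    (hT' : IsLift π (fun u v : X' => dist u v) T R T')
    (hT : Roe.PropagationLE (fun x y : X => dist x y) T R) {w v : X'}
    (h : dist (π w) (π v) = dist w v) : Roe.entry T' w v = Roe.entry T (π w) (π v) := by
  rcases le_or_gt (dist w v) R with hwv | hwv
  · exact (hT' w v).1 hwv
  · rw [(hT' w v).2 hwv, hT _ _ (show R < dist (π w) (π v) by rwa [h])]

end Lift

namespace IsMetricCover

variable {X' X : Type*} [PseudoMetricSpace X'] [PseudoMetricSpace X] {π : X' → X} {K : ℝ}
  (hπ : IsMetricCover (fun u v : X' => dist u v) (fun x y : X => dist x y) π K) (u : X')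
include hπ

theorem dist_map_eq {w w' : X'} (hw : w ∈ ball u K) (hw' : w' ∈ ball u K) :
    dist (π w) (π w') = dist w w' :=
  (hπ.2 u).2 w w' (mem_ball'.1 hw) (mem_ball'.1 hw')

theorem injOn_closedBall {r : ℝ} (hr : r < K) : Set.InjOn π (closedBall u r) :=
  (hπ.2 u).1.injOn.mono fun _ hw => mem_ball'.1 (closedBall_subset_ball hr hw)

theorem image_closedBall {r : ℝ} (hr : r < K) : π '' closedBall u r = closedBall (π u) r := by
  have hu (hr0 : 0 ≤ r) : u ∈ ball u K := mem_ball_self (hr0.trans_lt hr)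
  ext x
  constructor
  · rintro ⟨w, hw, rfl⟩
    have hw0 := dist_nonneg.trans (mem_closedBall.1 hw)
    rw [mem_closedBall, hπ.dist_map_eq u (closedBall_subset_ball hr hw) (hu hw0)]
    exact hw
  · intro hx
    have hx0 := dist_nonneg.trans (mem_closedBall.1 hx)
    obtain ⟨w, hw, rfl⟩ := (hπ.2 u).1.surjOn (mem_ball'.1 (closedBall_subset_ball hr hx))
    refine ⟨w, ?_, rfl⟩
    rwa [mem_closedBall, ← hπ.dist_map_eq u (mem_ball'.2 hw) (hu hx0)]

end IsMetricCover

theorem lift_vector_norms_general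
    (H₀ : Type) [NormedAddCommGroup H₀] [InnerProductSpace ℂ H₀]
    (X' X : Type) [MetricSpace X'] [MetricSpace X]
    (π : X' → X) (K R S : ℝ) (hR : 0 < R)
    (hcover : IsMetricCover (fun u v : X' => dist u v) (fun x y : X => dist x y) π K)
    (hK : S + R + 1 ≤ K)
    (T : L2 X H₀ →L[ℂ] L2 X H₀)
    (hT : Roe.PropagationLE (fun x y : X => dist x y) T R)
    (T' : L2 X' H₀ →L[ℂ] L2 X' H₀)
    (hT' : IsLift π (fun u v : X' => dist u v) T R T')
    (u : X') (ξ' : L2 X' H₀)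
    (hsupp : ∀ w : X', ξ' w ≠ 0 → dist w u ≤ S)
    (ξ : L2 X H₀)
    (hξ₁ : ∀ w : X', dist w u ≤ S → ξ (π w) = ξ' w)
    (hξ₂ : ∀ x : X, (∀ w : X', dist w u ≤ S → π w ≠ x) → ξ x = 0) :
    ‖ξ‖ = ‖ξ'‖ ∧ ‖T ξ‖ = ‖T' ξ'‖ := by
  have hSK : S < K := by linarith
  have hSRK : S + R < K := by linarith
  have hξ_supp : support ξ ⊆ π '' closedBall u S := fun x hx => by
    by_contra h
    exact hx (hξ₂ x fun w hw hwx => h ⟨w, hw, hwx⟩)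
  have hTξ_supp : support (T ξ) ⊆ π '' closedBall u (S + R) := by
    rw [hcover.image_closedBall u hSRK]
    exact hT.support_apply_subset (hξ_supp.trans (hcover.image_closedBall u hSK).subset)
  have hT'ξ'_supp : support (T' ξ') ⊆ closedBall u (S + R) :=
    hT'.propagationLE.support_apply_subset hsupp
  have hp : 0 < (2 : ℝ≥0∞).toReal := by norm_num
  refine ⟨lp.norm_eq_norm_of_injOn hp (hcover.injOn_closedBall u hSK) hξ_supp hsupp hξ₁,
    lp.norm_eq_norm_of_injOn hp (hcover.injOn_closedBall u hSRK) hTξ_supp hT'ξ'_supp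
      fun w hw => ?_⟩
  refine Roe.apply_eq_apply_of_injOn (hcover.injOn_closedBall u hSK) hξ_supp hsupp hξ₁
    fun v hv => (hT'.entry_eq_of_dist_eq hT (hcover.dist_map_eq u ?_ ?_)).symm
  exacts [closedBall_subset_ball hSRK hw, closedBall_subset_ball hSK hv]

/-- a vector supported in a ball of a metric cover pushes down with the same
norm, and the lifted operator acts on it with the same norm as the original operator. -/
theorem lift_vector_norms
    (H₀ : Type) [NormedAddCommGroup H₀] [InnerProductSpace ℂ H₀] [CompleteSpace H₀]
    [TopologicalSpace.SeparableSpace H₀] (hinf : ¬ FiniteDimensional ℂ H₀)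
    (X' X : Type) [MetricSpace X'] [MetricSpace X]
    (hud' : ∃ δ : ℝ, 0 < δ ∧ ∀ u v : X', u ≠ v → δ ≤ dist u v)
    (hud : ∃ δ : ℝ, 0 < δ ∧ ∀ x y : X, x ≠ y → δ ≤ dist x y)
    (π : X' → X) (K R S : ℝ) (hR : 0 < R) (hS : 0 < S)
    (hcover : IsMetricCover (fun u v : X' => dist u v) (fun x y : X => dist x y) π K)
    (hK : S + R + 1 ≤ K)
    (T : L2 X H₀ →L[ℂ] L2 X H₀)
    (hT : Roe.PropagationLE (fun x y : X => dist x y) T R)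
    (T' : L2 X' H₀ →L[ℂ] L2 X' H₀)
    (hT' : IsLift π (fun u v : X' => dist u v) T R T')
    (u : X') (ξ' : L2 X' H₀)
    (hsupp : ∀ w : X', ξ' w ≠ 0 → dist w u ≤ S)
    (ξ : L2 X H₀)
    (hξ₁ : ∀ w : X', dist w u ≤ S → ξ (π w) = ξ' w)
    (hξ₂ : ∀ x : X, (∀ w : X', dist w u ≤ S → π w ≠ x) → ξ x = 0) :
    ‖ξ‖ = ‖ξ'‖ ∧ ‖T ξ‖ = ‖T' ξ'‖ :=
  lift_vector_norms_general H₀ X' X π K R S hR hcover hK T hT T' hT' u ξ' hsupp ξ hξ₁ hξ₂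
end
end

section
/- Let T_∞ be the graph whose vertex set consists of all finite sequences of natural numbers, two sequences being adjacent exactly when one is obtained from the other by appending a single term (so T_∞ is a tree in which every vertex has countably infinite degree). Then for every connected acyclic simple graph T with countably many vertices there exists an injective map f : V(T) → V(T_∞) such that d_{T_∞}(f(u),f(v)) = d_T(u,v) for all u,v ∈ V(T); that is, every countable tree embeds isometrically into T_∞. -/
/-!
Root the tree at `r`, label its vertices injectively by natural numbers, and send `v` to the
sequence of labels along the path from `r` to `v`. In a tree the paths from `r` to two adjacent
vertices differ by one final step, so this is an injective graph homomorphism into `T_∞`.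
`T_∞` is acyclic (the edge from `a` to `a ++ [n]` is a bridge cutting off the extensions of
`a ++ [n]`), and an injective homomorphism maps geodesics to paths, which in an acyclic graph
are geodesics.
-/

noncomputable section

open scoped ENNReal

/-- The tree `T_∞` whose vertices are the finite sequences of natural numbers, two sequences
being adjacent exactly when one is obtained from the other by appending a single term. -/
def Tinfty : SimpleGraph (List ℕ) where
  Adj a b := (∃ n : ℕ, b = a ++ [n]) ∨ (∃ n : ℕ, a = b ++ [n])
  symm := by
    constructor
    intro a b h
    rcases h with h | h
    · exact Or.inr h
    · exact Or.inl h
  loopless := by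
    constructor
    intro a h
    rcases h with ⟨n, h⟩ | ⟨n, h⟩ <;>
    · have := congrArg List.length h
      simp at this

open SimpleGraph

theorem prefix_of_tinfty_deleteEdges_walk {a : List ℕ} {n : ℕ} {x y : List ℕ}
    (w : (Tinfty.deleteEdges {s(a, a ++ [n])}).Walk x y) (hx : a ++ [n] <+: x) :
    a ++ [n] <+: y := by
  induction w with
  | nil => exact hx
  | @cons x z y h _ ih =>
    apply ih
    obtain ⟨hxz, hne⟩ := deleteEdges_adj.mp h
    rcases hxz with ⟨m, rfl⟩ | ⟨m, rfl⟩
    · exact hx.trans (List.prefix_append _ _)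
    · rcases List.prefix_concat_iff.mp hx with heq | hz
      · obtain ⟨rfl, ⟨⟩⟩ := List.append_inj' heq rfl
        exact absurd (Set.mem_singleton_iff.mpr Sym2.eq_swap) hne
      · exact hz

theorem tinfty_isBridge_append (a : List ℕ) (n : ℕ) : Tinfty.IsBridge s(a, a ++ [n]) := by
  rw [isBridge_iff]
  intro hr
  have := (prefix_of_tinfty_deleteEdges_walk hr.symm.some (List.prefix_refl _)).length_le
  simp at this

theorem tinfty_isAcyclic : Tinfty.IsAcyclic := by
  refine isAcyclic_iff_forall_adj_isBridge.mpr fun v w hvw => ?_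
  rcases hvw with ⟨n, rfl⟩ | ⟨n, rfl⟩
  · exact tinfty_isBridge_append v n
  · rw [Sym2.eq_swap]
    exact tinfty_isBridge_append w n

namespace SimpleGraph

variable {V W : Type*} {G : SimpleGraph V} {H : SimpleGraph W}

theorem IsAcyclic.dist_eq_length_of_isPath (hG : G.IsAcyclic) {u v : V} {p : G.Walk u v}
    (hp : p.IsPath) : G.dist u v = p.length := by
  obtain ⟨q, hq, hql⟩ := p.reachable.exists_path_of_dist
  rw [← hql, Subtype.mk.inj <| hG.subsingleton_path u v |>.elim ⟨q, hq⟩ ⟨p, hp⟩]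

theorem IsAcyclic.dist_map_of_injective (hH : H.IsAcyclic) (f : G →g H)
    (hf : Function.Injective f) {u v : V} (huv : G.Reachable u v) :
    H.dist (f u) (f v) = G.dist u v := by
  obtain ⟨p, hp, hpl⟩ := huv.exists_path_of_dist
  rw [hH.dist_eq_length_of_isPath (hp.map hf), Walk.length_map, hpl]

section PathCode

variable {r : V}

def pathCode (e : V → ℕ) (P : ∀ v, G.Walk r v) (v : V) : List ℕ :=
  (P v).support.tail.map e

theorem pathCode_eq_append_of_eq_concat {e : V → ℕ} {P : ∀ v, G.Walk r v} {u v : V}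
    (h : G.Adj u v) (hP : P v = (P u).concat h) : pathCode e P v = pathCode e P u ++ [e v] := by
  rw [pathCode, pathCode, hP, Walk.support_concat,
    List.tail_append_of_ne_nil (Walk.support_ne_nil _), List.map_append, List.map_singleton]

theorem tinfty_adj_pathCode (hG : G.IsAcyclic) {e : V → ℕ} {P : ∀ v, G.Walk r v}
    (hP : ∀ v, (P v).IsPath) {u v : V} (h : G.Adj u v) :
    Tinfty.Adj (pathCode e P u) (pathCode e P v) := by
  by_cases hu : u ∈ (P v).support
  · exact Or.inl ⟨e v, pathCode_eq_append_of_eq_concat h (hG.path_concat (hP u) (hP v) h hu)⟩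
  · have hv := hG.mem_support_of_ne_mem_support_of_adj_of_isPath (hP u) (hP v) h hu
    exact Or.inr
      ⟨e u, pathCode_eq_append_of_eq_concat h.symm (hG.path_concat (hP v) (hP u) h.symm hv)⟩

theorem pathCode_injective {e : V → ℕ} (he : Function.Injective e) (P : ∀ v, G.Walk r v) :
    Function.Injective (pathCode e P) := by
  intro u v huv
  have htail : (P u).support.tail = (P v).support.tail := List.map_injective_iff.mpr he huv
  have hsupp : (P u).support = (P v).support := by
    rw [← Walk.cons_tail_support, ← (P v).cons_tail_support, htail]
  rw [← (P u).getLast_support, ← (P v).getLast_support]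
  simp only [hsupp]

end PathCode

theorem IsTree.exists_injective_hom_tinfty [Countable V] (hG : G.IsTree) :
    ∃ φ : G →g Tinfty, Function.Injective φ := by
  obtain ⟨e, he⟩ := Countable.exists_injective_nat V
  obtain ⟨r⟩ := hG.connected.nonempty
  choose P hP using fun v => (hG.existsUnique_path r v).exists
  exact ⟨⟨pathCode e P, tinfty_adj_pathCode hG.isAcyclic hP⟩, pathCode_injective he P⟩

end SimpleGraph

/-- every countable tree embeds isometrically into `T_∞`. -/
theorem countable_tree_isometrically_embeds_in_Tinfty
    (V : Type) [Countable V] (T : SimpleGraph V) (hT : T.IsTree) :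
    ∃ f : V → List ℕ, Function.Injective f ∧
      ∀ u v : V, Tinfty.dist (f u) (f v) = T.dist u v := by
  obtain ⟨φ, hφ⟩ := hT.exists_injective_hom_tinfty
  exact ⟨φ, hφ, fun u v => tinfty_isAcyclic.dist_map_of_injective φ hφ (hT.connected u v)⟩
end
end
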